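/- Assuming that every $m$-point planar set determines $O(m^{2+\delta})$ unit-area triangles for some fixed $0 < \delta \le 1/3$: if $S$ is a set of $n$ points in the plane and some line contains exactly $\ell$ points of $S$, then $S$ determines at most $O((n-\ell)\ell + (n-\ell)^{2+\delta})$ unit-area triangles. -/

import Mathlib

/-- Twice the signed area: the determinant of two planar vectors. -/
def det2 (u v : Fin 2 → ℝ) : ℝ := u 0 * v 1 - u 1 * v 0

/-- `T` is a unit-area triangle with vertices in the plane. -/
def IsUnitTriangle (T : Set (Fin 2 → ℝ)) : Prop :=
  ∃ a b c : Fin 2 → ℝ, a ≠ b ∧ a ≠ c ∧ b ≠ c ∧ T = {a, b, c} ∧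
    |det2 (b - a) (c - a)| / 2 = 1

/-- The set of unit-area triangles with vertices in `P`. -/
def unitTriangles (P : Set (Fin 2 → ℝ)) : Set (Set (Fin 2 → ℝ)) :=
  {T | T ⊆ P ∧ IsUnitTriangle T}

/-!
A unit triangle of `S` with no vertex on the line `L` is a unit triangle of `S \ L`, and none has
all three vertices on `L`. Every other one has a vertex `a ∉ L`, a vertex `c ∈ L` and a third
vertex `b`, and is determined, up to the sign of its area, by a pair of its vertices: by `(a, b)`
when `b - a` is not parallel to `L` (then `c` is the point of `L` on one of the two lines parallel
to `b - a` at the right distance), and otherwise by `(a, c)` (then `b` is the point of the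
parallel to `L` through `a` at the right distance from the line `ac`). This gives at most
`2 m n + 2 m ℓ` such triangles, where `m = n - ℓ = #(S \ L)`, while the hypothesis bounds the
unit triangles of `S \ L` by `C m^(2+δ)`, and `m² ≤ m^(2+δ)`.
-/

lemma det2_smul_eq_sub (d e w : Fin 2 → ℝ) :
    det2 d e • w = det2 d w • e - det2 e w • d := by
  ext i; fin_cases i <;> simp [det2] <;> ring

lemma det2_comm (u v : Fin 2 → ℝ) : det2 v u = -det2 u v := by
  simp only [det2]; ring

lemma det2_sub_right (u v w : Fin 2 → ℝ) : det2 u (v - w) = det2 u v - det2 u w := by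
  simp only [det2, Pi.sub_apply]; ring

lemma det2_eq_zero_iff_exists_smul {e : Fin 2 → ℝ} (he : e ≠ 0) (w : Fin 2 → ℝ) :
    det2 e w = 0 ↔ ∃ r : ℝ, r • e = w := by
  refine ⟨fun h => ?_, fun ⟨r, hr⟩ => ?_⟩
  swap
  · subst hr; simp only [det2, Pi.smul_apply, smul_eq_mul]; ring
  set d : Fin 2 → ℝ := ![e 1, -e 0]
  have hd : det2 d e ≠ 0 := by
    have hde : det2 d e = e 0 ^ 2 + e 1 ^ 2 := by simp [d, det2]; ring
    rw [hde]
    intro h0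
    apply he
    ext i; fin_cases i <;> simp <;> nlinarith [sq_nonneg (e 0), sq_nonneg (e 1)]
  refine ⟨det2 d w / det2 d e, ?_⟩
  have hcramer := det2_smul_eq_sub d e w
  rw [h, zero_smul, sub_zero] at hcramer
  rw [div_eq_inv_mul, mul_smul, ← hcramer, smul_smul, inv_mul_cancel₀ hd, one_smul]

lemma collinear_iff_det2_eq_zero {p q : Fin 2 → ℝ} (hpq : p ≠ q) (x : Fin 2 → ℝ) :
    Collinear ℝ {p, q, x} ↔ det2 (q - p) (x - p) = 0 := by
  have hline : Collinear ℝ {p, q, x} ↔ x ∈ line[ℝ, p, q] := by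
    have hperm : ({p, q, x} : Set (Fin 2 → ℝ)) = {x, p, q} := by
      rw [Set.insert_comm, Set.pair_comm, Set.insert_comm, Set.pair_comm]
    rw [hperm]
    exact ⟨fun h => h.mem_affineSpan_of_mem_of_ne (by simp) (by simp) (by simp) hpq,
      collinear_insert_of_mem_affineSpan_pair⟩
  rw [hline, det2_eq_zero_iff_exists_smul (sub_ne_zero.2 hpq.symm), ← vsub_vadd x p,
    vadd_left_mem_affineSpan_pair]
  simp [vsub_eq_sub]

/-- The point `z` on the line through `o` in direction `e` with `det2 (y - x) (z - x) = ε`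
(junk when `det2 (y - x) e = 0`). -/
noncomputable def thirdVertex (e o x y : Fin 2 → ℝ) (ε : ℝ) : Fin 2 → ℝ :=
  o + ((ε - det2 (y - x) (o - x)) / det2 (y - x) e) • e

lemma eq_thirdVertex {e o x y z : Fin 2 → ℝ} (hd : det2 (y - x) e ≠ 0)
    (hz : det2 e (z - o) = 0) : z = thirdVertex e o x y (det2 (y - x) (z - x)) := by
  have hcramer := det2_smul_eq_sub (y - x) e (z - o)
  rw [hz, zero_smul, sub_zero] at hcramer
  have hlin : det2 (y - x) (z - x) - det2 (y - x) (o - x) = det2 (y - x) (z - o) := by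
    rw [← det2_sub_right, sub_sub_sub_cancel_right]
  rw [thirdVertex, hlin, div_eq_inv_mul, mul_smul, ← hcramer, smul_smul, inv_mul_cancel₀ hd,
    one_smul, add_sub_cancel]

def triangleFamily (e : Fin 2 → ℝ) (o : (Fin 2 → ℝ) → Fin 2 → ℝ)
    (X Y : Set (Fin 2 → ℝ)) : Set (Set (Fin 2 → ℝ)) :=
  (fun w : (Fin 2 → ℝ) × (Fin 2 → ℝ) × ℝ =>
    {w.1, w.2.1, thirdVertex e (o w.1) w.1 w.2.1 w.2.2}) '' (X ×ˢ Y ×ˢ {2, -2})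

section TriangleFamily

variable (e : Fin 2 → ℝ) (o : (Fin 2 → ℝ) → Fin 2 → ℝ) {X Y : Set (Fin 2 → ℝ)}

lemma triangleFamily_finite (hX : X.Finite) (hY : Y.Finite) : (triangleFamily e o X Y).Finite :=
  (hX.prod (hY.prod (Set.toFinite _))).image _

lemma ncard_triangleFamily_le (hX : X.Finite) (hY : Y.Finite) :
    (triangleFamily e o X Y).ncard ≤ 2 * (X.ncard * Y.ncard) := by
  refine (Set.ncard_image_le (hX.prod (hY.prod (Set.toFinite _)))).trans ?_
  rw [Set.ncard_prod, Set.ncard_prod, Set.ncard_pair (by norm_num)]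
  exact (by ring : _ = 2 * (X.ncard * Y.ncard)).le

end TriangleFamily

lemma abs_det2_sub_swap (a b c : Fin 2 → ℝ) :
    |det2 (c - a) (b - a)| = |det2 (b - a) (c - a)| := by
  rw [det2_comm, abs_neg]

lemma det2_sub_rotate (a b c : Fin 2 → ℝ) : det2 (c - b) (a - b) = det2 (b - a) (c - a) := by
  simp only [det2, Pi.sub_apply]; ring

lemma exists_relabel_not_first_last {P : (Fin 2 → ℝ) → Prop} {a b c : Fin 2 → ℝ}
    (hon : P a ∨ P b ∨ P c) (hoff : ¬P a ∨ ¬P b ∨ ¬P c) :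
    ∃ a' b' c', ({a, b, c} : Set (Fin 2 → ℝ)) = {a', b', c'} ∧
      |det2 (b' - a') (c' - a')| = |det2 (b - a) (c - a)| ∧ ¬P a' ∧ P c' := by
  have hperm : ∀ x y z : Fin 2 → ℝ, ({a, b, c} : Set (Fin 2 → ℝ)) = {x, y, z} ↔
      ∀ w, (w = a ∨ w = b ∨ w = c ↔ w = x ∨ w = y ∨ w = z) := fun x y z => by
    simp only [Set.ext_iff, Set.mem_insert_iff, Set.mem_singleton_iff]
  by_cases ha : P a <;> by_cases hc : P c
  · have hb : ¬P b := by tauto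
    exact ⟨b, c, a, (hperm _ _ _).2 fun _ => by tauto, by rw [det2_sub_rotate], hb, ha⟩
  · exact ⟨c, b, a, (hperm _ _ _).2 fun _ => by tauto,
      by rw [abs_det2_sub_swap, det2_sub_rotate c a b], hc, ha⟩
  · exact ⟨a, b, c, rfl, rfl, ha, hc⟩
  · have hb : P b := by tauto
    exact ⟨a, c, b, (hperm _ _ _).2 fun _ => by tauto, abs_det2_sub_swap a b c, ha, hb⟩

def lineThrough (p e : Fin 2 → ℝ) : Set (Fin 2 → ℝ) := {x | det2 e (x - p) = 0}

section LineThrough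

variable {p e a b c : Fin 2 → ℝ} {S : Set (Fin 2 → ℝ)}

lemma det2_sub_eq_zero_of_mem_lineThrough (ha : a ∈ lineThrough p e)
    (hb : b ∈ lineThrough p e) : det2 e (b - a) = 0 := by
  rw [← sub_sub_sub_cancel_right b a p, det2_sub_right, ha.out, hb.out, sub_zero]

lemma det2_sub_sub_eq_zero_of_mem_lineThrough (he : e ≠ 0) (ha : a ∈ lineThrough p e)
    (hb : b ∈ lineThrough p e) (hc : c ∈ lineThrough p e) : det2 (b - a) (c - a) = 0 := by
  have hcramer := det2_smul_eq_sub (b - a) e (c - a)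
  rw [det2_comm, det2_sub_eq_zero_of_mem_lineThrough ha hb,
    det2_sub_eq_zero_of_mem_lineThrough ha hc, neg_zero, zero_smul, zero_smul, sub_zero, eq_comm,
    smul_eq_zero] at hcramer
  exact hcramer.resolve_right he

lemma det2_sub_ne_zero_of_notMem_lineThrough (ha : a ∉ lineThrough p e)
    (hc : c ∈ lineThrough p e) : det2 (c - a) e ≠ 0 := by
  rw [det2_comm, ← sub_sub_sub_cancel_right c a p, det2_sub_right, hc.out, zero_sub, neg_neg]
  exact ha

lemma insert_mem_triangleFamily (ha : a ∈ S \ lineThrough p e) (hb : b ∈ S)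
    (hc : c ∈ S ∩ lineThrough p e) (harea : |det2 (b - a) (c - a)| = 2) :
    {a, b, c} ∈ triangleFamily e (fun _ => p) (S \ lineThrough p e) S ∪
      triangleFamily e id (S \ lineThrough p e) (S ∩ lineThrough p e) := by
  have hsign : ∀ r : ℝ, |r| = 2 → r ∈ ({2, -2} : Set ℝ) := fun r hr => by
    rcases (abs_eq (by norm_num)).1 hr with h | h <;> simp [h]
  by_cases hd : det2 (b - a) e = 0
  · have hb' : det2 e (b - a) = 0 := by rw [det2_comm, hd, neg_zero]
    refine Or.inr ⟨(a, c, det2 (c - a) (b - a)), ⟨ha, hc, hsign _ ?_⟩, ?_⟩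
    · rwa [abs_det2_sub_swap]
    · dsimp only [id]
      rw [← eq_thirdVertex (det2_sub_ne_zero_of_notMem_lineThrough ha.2 hc.2) hb',
        Set.pair_comm]
  · exact Or.inl ⟨(a, b, det2 (b - a) (c - a)), ⟨ha, hb, hsign _ harea⟩,
      by dsimp only; rw [← eq_thirdVertex hd hc.2]⟩

lemma unitTriangles_subset_union (he : e ≠ 0) :
    unitTriangles S ⊆ unitTriangles (S \ lineThrough p e) ∪
      (triangleFamily e (fun _ => p) (S \ lineThrough p e) S ∪
        triangleFamily e id (S \ lineThrough p e) (S ∩ lineThrough p e)) := by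
  rintro T ⟨hTS, hT⟩
  by_cases hoff : T ⊆ S \ lineThrough p e
  · exact Or.inl ⟨hoff, hT⟩
  obtain ⟨a, b, c, -, -, -, rfl, harea⟩ := hT
  have hon : a ∈ lineThrough p e ∨ b ∈ lineThrough p e ∨ c ∈ lineThrough p e := by
    simp only [Set.insert_subset_iff, Set.singleton_subset_iff, Set.mem_sdiff] at hTS hoff
    tauto
  have hnot_all : a ∉ lineThrough p e ∨ b ∉ lineThrough p e ∨ c ∉ lineThrough p e := by
    by_contra! h
    rw [det2_sub_sub_eq_zero_of_mem_lineThrough he h.1 h.2.1 h.2.2] at harea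
    norm_num at harea
  obtain ⟨a', b', c', hperm, harea', ha', hc'⟩ := exists_relabel_not_first_last hon hnot_all
  rw [hperm] at hTS ⊢
  exact Or.inr (insert_mem_triangleFamily ⟨hTS (by simp), ha'⟩ (hTS (by simp))
    ⟨hTS (by simp), hc'⟩ (by rw [harea']; linarith))

lemma ncard_unitTriangles_le (he : e ≠ 0) (hS : S.Finite) :
    (unitTriangles S).ncard ≤ (unitTriangles (S \ lineThrough p e)).ncard +
      2 * ((S \ lineThrough p e).ncard * S.ncard) +
      2 * ((S \ lineThrough p e).ncard * (S ∩ lineThrough p e).ncard) := by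
  have hB : (S \ lineThrough p e).Finite := hS.sdiff
  have hA : (S ∩ lineThrough p e).Finite := hS.inter_of_left _
  have hUB : (unitTriangles (S \ lineThrough p e)).Finite :=
    hB.finite_subsets.subset fun _ hT => hT.1
  calc (unitTriangles S).ncard
      ≤ (unitTriangles (S \ lineThrough p e)).ncard +
          ((triangleFamily e (fun _ => p) (S \ lineThrough p e) S).ncard +
            (triangleFamily e id (S \ lineThrough p e) (S ∩ lineThrough p e)).ncard) :=
        (Set.ncard_le_ncard (unitTriangles_subset_union he) (hUB.union
          ((triangleFamily_finite _ _ hB hS).union (triangleFamily_finite _ _ hB hA)))).trans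
          ((Set.ncard_union_le _ _).trans (Nat.add_le_add_left (Set.ncard_union_le _ _) _))
    _ ≤ _ := by
        rw [← add_assoc]
        gcongr
        · exact ncard_triangleFamily_le _ _ hB hS
        · exact ncard_triangleFamily_le _ _ hB hA

end LineThrough

lemma natCast_sq_le_rpow_two_add (m : ℕ) {δ : ℝ} (hδ : 0 ≤ δ) :
    (m : ℝ) ^ 2 ≤ (m : ℝ) ^ ((2 : ℝ) + δ) := by
  rcases Nat.eq_zero_or_pos m with rfl | hm
  · rw [Nat.cast_zero, Real.zero_rpow (by positivity)]; norm_num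
  · rw [← Real.rpow_natCast]
    exact Real.rpow_le_rpow_of_exponent_le (Nat.one_le_cast.2 hm) (by push_cast; linarith)

theorem stmt7_general (δ C : ℝ) (hδ0 : 0 < δ) (hC : 0 < C)
    (hyp : ∀ P : Set (Fin 2 → ℝ), P.Finite →
      ((unitTriangles P).ncard : ℝ) ≤ C * (P.ncard : ℝ) ^ ((2 : ℝ) + δ)) :
    ∃ C' : ℝ, 0 < C' ∧
      ∀ (S : Set (Fin 2 → ℝ)), S.Finite →
        ∀ (n ℓ : ℕ), S.ncard = n →
        ∀ (p q : Fin 2 → ℝ), p ≠ q →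
          (S ∩ {x | Collinear ℝ {p, q, x}}).ncard = ℓ →
          ((unitTriangles S).ncard : ℝ) ≤
            C' * (((n - ℓ : ℕ) : ℝ) * ℓ + ((n - ℓ : ℕ) : ℝ) ^ ((2 : ℝ) + δ)) := by
  refine ⟨C + 4, by linarith, ?_⟩
  rintro S hS n ℓ rfl p q hpq rfl
  set L := lineThrough p (q - p)
  have hline : {x | Collinear ℝ {p, q, x}} = L := Set.ext (collinear_iff_det2_eq_zero hpq)
  have hsplit := Set.ncard_inter_add_ncard_sdiff_eq_ncard S L hS
  have hcount := ncard_unitTriangles_le (p := p) (sub_ne_zero.2 hpq.symm) hS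
  have hoff := hyp (S \ L) hS.sdiff
  have hsq := natCast_sq_le_rpow_two_add (S \ L).ncard hδ0.le
  rw [hline, ← hsplit, Nat.add_sub_cancel_left]
  rw [← hsplit] at hcount
  set m := (S \ L).ncard
  set ℓ := (S ∩ L).ncard
  have hcount' : ((unitTriangles S).ncard : ℝ) ≤
      (unitTriangles (S \ L)).ncard + 2 * m ^ 2 + 4 * (m * ℓ) := by
    exact_mod_cast hcount.trans_eq (by ring)
  have hmℓ : (0 : ℝ) ≤ m * ℓ := by positivity
  nlinarith

/-- assuming every `m`-point planar set determines at most
`C · m^(2+δ)` unit-area triangles (`0 < δ ≤ 1/3`), any `n`-point set `S` with a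
line containing exactly `ℓ` of its points determines at most
`O((n-ℓ)·ℓ + (n-ℓ)^(2+δ))` unit-area triangles. -/
theorem stmt7 (δ C : ℝ) (hδ0 : 0 < δ) (hδ1 : δ ≤ 1 / 3) (hC : 0 < C)
    (hyp : ∀ P : Set (Fin 2 → ℝ), P.Finite →
      ((unitTriangles P).ncard : ℝ) ≤ C * (P.ncard : ℝ) ^ ((2 : ℝ) + δ)) :
    ∃ C' : ℝ, 0 < C' ∧
      ∀ (S : Set (Fin 2 → ℝ)), S.Finite →
        ∀ (n ℓ : ℕ), S.ncard = n →
        ∀ (p q : Fin 2 → ℝ), p ≠ q →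
          (S ∩ {x | Collinear ℝ {p, q, x}}).ncard = ℓ →
          ((unitTriangles S).ncard : ℝ) ≤
            C' * (((n - ℓ : ℕ) : ℝ) * ℓ + ((n - ℓ : ℕ) : ℝ) ^ ((2 : ℝ) + δ)) :=
  stmt7_general δ C hδ0 hC hyp
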